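/- arXiv:1301.0252 — 3 statements merged into one kernel-verified Lean document; each statement's English description precedes it below -/
import Mathlib

section
/- For every prime p ≥ 5 and nonnegative integers n ≥ m, the binomial coefficient C(n·p, m·p) is congruent to C(n,m) modulo p³. -/
/-!
In `(ZMod (p ^ 3))[X]` write `(1 + X) ^ p = (1 + X ^ p) + p • G` with
`G = ∑_{0<j<p} (C(p,j)/p) X ^ j`. Expanding `(1 + X) ^ (n p)` binomially, the `k`-th term is
`C(n,k) p ^ k G ^ k (1 + X ^ p) ^ (n - k)`, and only coefficients at multiples of `p` matter.
Those of `G` vanish; the only one of `G ^ 2` is at `X ^ p`, namely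
`∑ (C(p,j)/p) ^ 2 ≡ ∑ j⁻² ≡ ∑ j² ≡ 0 (mod p)` for `p ≥ 5`; and `p ^ k = 0` for `k ≥ 3`.
So only the term `k = 0`, i.e. `(1 + X ^ p) ^ n`, contributes.
-/

open Finset Polynomial

lemma Nat.Prime.cast_choose_sub_one {p k : ℕ} (hp : p.Prime) (hk : k < p) :
    ((p - 1).choose k : ZMod p) = (-1) ^ k := by
  induction k with
  | zero => simp
  | succ k ih =>
    have hpascal : p.choose (k + 1) = (p - 1).choose k + (p - 1).choose (k + 1) := by
      rw [← Nat.choose_succ_succ', Nat.sub_add_cancel hp.one_le]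
    have hzero : (p.choose (k + 1) : ZMod p) = 0 :=
      (ZMod.natCast_eq_zero_iff _ _).2 (hp.dvd_choose_self k.succ_ne_zero hk)
    rw [hpascal, Nat.cast_add, ih (by omega)] at hzero
    rw [pow_succ]
    linear_combination hzero

lemma Nat.Prime.choose_div_self_mul {p j : ℕ} (hp : p.Prime) (hj0 : j ≠ 0) (hjp : j < p) :
    p.choose j / p * j = (p - 1).choose (j - 1) := by
  apply Nat.eq_of_mul_eq_mul_left hp.pos
  have h := Nat.add_one_mul_choose_eq (p - 1) (j - 1)
  rw [Nat.sub_add_cancel hp.one_le, Nat.sub_add_cancel (by omega)] at h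
  rw [h, ← mul_assoc, Nat.mul_div_cancel' (hp.dvd_choose_self hj0 hjp)]

lemma ZMod.sum_range_natCast {M : Type*} [AddCommMonoid M] (n : ℕ) [NeZero n]
    (f : ZMod n → M) :
    ∑ j ∈ range n, f j = ∑ x : ZMod n, f x := by
  refine sum_nbij' (fun j ↦ (j : ZMod n)) ZMod.val (by simp) (by simp [ZMod.val_lt])
    (fun j hj ↦ ZMod.val_cast_of_lt (mem_range.1 hj)) (fun x _ ↦ ZMod.natCast_zmod_val x)
    (fun _ _ ↦ rfl)

lemma Nat.Prime.dvd_sum_sq_choose_div_self {p : ℕ} (hp : p.Prime) (hp5 : 5 ≤ p) :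
    p ∣ ∑ j ∈ Ioo 0 p, (p.choose j / p) ^ 2 := by
  have := Fact.mk hp
  rw [← ZMod.natCast_eq_zero_iff]
  push_cast
  have hterm : ∀ j ∈ Ioo 0 p,
      ((p.choose j / p : ℕ) : ZMod p) ^ 2 = ((j : ZMod p)⁻¹) ^ 2 := by
    intro j hj
    obtain ⟨hj0, hjp⟩ := mem_Ioo.1 hj
    have hj : (j : ZMod p) ≠ 0 := by
      rw [Ne, ZMod.natCast_eq_zero_iff]
      exact fun h ↦ absurd (Nat.le_of_dvd hj0 h) (by omega)
    have hmul : ((p.choose j / p : ℕ) : ZMod p) * j = (-1) ^ (j - 1) := by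
      rw [← Nat.cast_mul, hp.choose_div_self_mul hj0.ne' hjp, hp.cast_choose_sub_one (by omega)]
    rw [inv_pow]
    refine eq_inv_of_mul_eq_one_left ?_
    rw [← mul_pow, hmul, ← pow_mul, mul_comm, pow_mul]
    simp
  have hrange :
      ∑ j ∈ Ioo 0 p, ((j : ZMod p)⁻¹) ^ 2 = ∑ j ∈ range p, ((j : ZMod p)⁻¹) ^ 2 := by
    rw [range_eq_Ico, ← Ioo_insert_left hp.pos, sum_insert (by simp)]
    simp
  rw [sum_congr rfl hterm, hrange, ZMod.sum_range_natCast p (fun x ↦ x⁻¹ ^ 2),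
    Fintype.sum_bijective _ inv_involutive.bijective _ (fun x ↦ x ^ 2) (fun _ ↦ rfl)]
  exact FiniteField.sum_pow_lt_card_sub_one (K := ZMod p) 2 (by rw [ZMod.card]; omega)

lemma Polynomial.contract_sum {R ι : Type*} [CommSemiring R] {p : ℕ} (hp : p ≠ 0)
    (s : Finset ι) (f : ι → R[X]) : contract p (∑ i ∈ s, f i) = ∑ i ∈ s, contract p (f i) := by
  ext n
  simp only [coeff_contract hp, finsetSum_coeff]

noncomputable def binomMiddleDiv (R : Type*) [Semiring R] (p : ℕ) : R[X] :=
  ∑ j ∈ Ioo 0 p, C ((p.choose j / p : ℕ) : R) * X ^ j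

section binomMiddleDiv

variable {R : Type*} [CommSemiring R] {p : ℕ}

lemma coeff_binomMiddleDiv (k : ℕ) :
    (binomMiddleDiv R p).coeff k = if k ∈ Ioo 0 p then ((p.choose k / p : ℕ) : R) else 0 := by
  simp only [binomMiddleDiv, finsetSum_coeff, coeff_C_mul_X_pow]
  exact sum_ite_eq _ _ _

lemma one_add_X_pow_prime (hp : p.Prime) :
    (1 + X : R[X]) ^ p = expand R p (1 + X) + C (p : R) * binomMiddleDiv R p := by
  ext k
  simp only [coeff_one_add_X_pow, coeff_add, map_add, map_one, expand_X, coeff_one,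
    coeff_X_pow, coeff_C_mul, coeff_binomMiddleDiv, mem_Ioo]
  rcases lt_trichotomy k p with hlt | rfl | hgt
  · rcases Nat.eq_zero_or_pos k with rfl | hk
    · simp [hp.pos.ne]
    · rw [if_neg hk.ne', if_neg hlt.ne, if_pos ⟨hk, hlt⟩, ← Nat.cast_mul,
        Nat.mul_div_cancel' (hp.dvd_choose_self hk.ne' hlt), zero_add, zero_add]
  · simp [hp.ne_zero]
  · simp [Nat.choose_eq_zero_of_lt hgt, hgt.ne', (hp.pos.trans hgt).ne', hgt.not_gt]

lemma contract_binomMiddleDiv (hp : p ≠ 0) : contract p (binomMiddleDiv R p) = 0 := by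
  ext i
  rw [coeff_contract hp, coeff_binomMiddleDiv, if_neg, coeff_zero]
  intro h
  obtain ⟨hpos, hlt⟩ := mem_Ioo.1 h
  exact hlt.not_ge (Nat.le_mul_of_pos_left p (Nat.pos_of_mul_pos_right hpos))

lemma natDegree_binomMiddleDiv_le : (binomMiddleDiv R p).natDegree ≤ p - 1 :=
  natDegree_sum_le_of_forall_le _ _ fun j hj ↦
    (natDegree_C_mul_X_pow_le _ _).trans (by have := mem_Ioo.1 hj; omega)

lemma coeff_binomMiddleDiv_sq_self (hp : p.Prime) :
    (binomMiddleDiv R p ^ 2).coeff p = ((∑ j ∈ Ioo 0 p, (p.choose j / p) ^ 2 : ℕ) : R) := by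
  rw [sq, coeff_mul, Nat.sum_antidiagonal_eq_sum_range_succ_mk, Nat.cast_sum]
  refine (sum_subset (fun j hj ↦ mem_range.2 (by have := mem_Ioo.1 hj; omega)) ?_).symm.trans
    (sum_congr rfl fun j hj ↦ ?_)
  · intro j hj hj'
    have : j = 0 ∨ j = p := by simp only [mem_range, mem_Ioo] at hj hj'; omega
    rcases this with rfl | rfl <;> simp [coeff_binomMiddleDiv]
  · have := mem_Ioo.1 hj
    rw [coeff_binomMiddleDiv, coeff_binomMiddleDiv, if_pos hj, if_pos (mem_Ioo.2 (by omega)),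
      Nat.choose_symm this.2.le, Nat.cast_pow, sq]

lemma contract_binomMiddleDiv_sq (hp : p.Prime) :
    contract p (binomMiddleDiv R p ^ 2) =
      C ((∑ j ∈ Ioo 0 p, (p.choose j / p) ^ 2 : ℕ) : R) * X := by
  ext i
  rw [coeff_contract hp.ne_zero, coeff_C_mul_X]
  rcases i with _ | _ | i
  · simp [sq, mul_coeff_zero, coeff_binomMiddleDiv]
  · simp [coeff_binomMiddleDiv_sq_self hp]
  · rw [if_neg (by omega)]
    refine coeff_eq_zero_of_natDegree_lt ((natDegree_pow_le).trans_lt ?_)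
    have := natDegree_binomMiddleDiv_le (R := R) (p := p)
    have : 2 * p ≤ (i + 1 + 1) * p := Nat.mul_le_mul_right _ (by omega)
    have := hp.two_le
    omega

end binomMiddleDiv

lemma contract_binomMiddleDiv_pow_mul_prime_pow {p : ℕ} (hp : p.Prime) (hp5 : 5 ≤ p) (k : ℕ) :
    contract p (binomMiddleDiv (ZMod (p ^ 3)) p ^ k) * C ((p : ZMod (p ^ 3)) ^ k) =
      if k = 0 then 1 else 0 := by
  have hp3 : (p : ZMod (p ^ 3)) ^ 3 = 0 := by rw [← Nat.cast_pow, ZMod.natCast_self]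
  match k with
  | 0 => rw [pow_zero, pow_zero, ← C_1, contract_C, C_1, mul_one, if_pos rfl]
  | 1 => simp [contract_binomMiddleDiv hp.ne_zero]
  | 2 =>
    obtain ⟨s, hs⟩ := hp.dvd_sum_sq_choose_div_self hp5
    rw [contract_binomMiddleDiv_sq hp, hs, if_neg two_ne_zero, mul_right_comm, ← C_mul]
    simp only [Nat.cast_mul]
    rw [show (p : ZMod (p ^ 3)) * s * p ^ 2 = p ^ 3 * s by ring, hp3]
    simp
  | k + 3 => simp [pow_add, hp3]

theorem contract_one_add_X_pow_mul_prime {p : ℕ} (hp : p.Prime) (hp5 : 5 ≤ p) (n : ℕ) :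
    contract p ((1 + X : (ZMod (p ^ 3))[X]) ^ (n * p)) = (1 + X) ^ n := by
  have hexpand : (1 + X : (ZMod (p ^ 3))[X]) ^ (n * p) = ∑ k ∈ range (n + 1),
      binomMiddleDiv _ p ^ k *
        expand _ p (C ((p : ZMod (p ^ 3)) ^ k * n.choose k) * (1 + X) ^ (n - k)) := by
    rw [mul_comm, pow_mul, one_add_X_pow_prime hp, add_comm, add_pow]
    refine sum_congr rfl fun k _ ↦ ?_
    simp only [map_mul, map_pow, map_natCast]
    ring
  rw [hexpand, Polynomial.contract_sum hp.ne_zero]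
  simp only [contract_mul_expand hp.ne_zero, C_mul, ← mul_assoc,
    contract_binomMiddleDiv_pow_mul_prime_pow hp hp5]
  simp

theorem stmt3_general (p : ℕ) (hp : p.Prime) (hp5 : 5 ≤ p) (n m : ℕ) :
    (n * p).choose (m * p) ≡ n.choose m [MOD p ^ 3] := by
  rw [← ZMod.natCast_eq_natCast_iff, ← coeff_one_add_X_pow, ← coeff_one_add_X_pow,
    ← coeff_contract hp.ne_zero, contract_one_add_X_pow_mul_prime hp hp5]

theorem stmt3 (p : ℕ) (hp : p.Prime) (hp5 : 5 ≤ p) (n m : ℕ) (hmn : m ≤ n) :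
    (n * p).choose (m * p) ≡ n.choose m [MOD p ^ 3] :=
  stmt3_general p hp hp5 n m
end

section
/- For all nonnegative integers n ≥ m with n ≥ 1, the binomial coefficient C(3n, 3m) is congruent to C(n, m) modulo 3^(2·ord₃(n)+2), where ord₃(n) is the 3-adic valuation of n. -/
/-!
Write `(3x)! = 3^x x! P(x)`, where `P(x)` is the product of the integers in `[1, 3x]` prime
to `3`. For `n = m + a` this gives `C(3n, 3m) P(m) = C(n, m) N` with
`N = ∏_{i<m} (3(a+i)+1)(3(a+i)+2)`. Pairing the factor `i` with `m - 1 - i`, the products of the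
pairs in `N` and in `P(m)` differ by multiples of `9an`, so `N² ≡ P(m)² (mod 9an)`; as
`N ≡ P(m) ≢ 0 (mod 3)`, `N + P(m)` is a unit and `N ≡ P(m) (mod 3^(ord₃ n + ord₃ a + 2))`.
Multiplying by `C(n, m)`, whose valuation is at least `ord₃ n - ord₃ a` because
`a C(n, a) = n C(n-1, a-1)`, and cancelling `P(m)` gives the congruence.
-/

open Finset Nat

theorem Nat.ModEq.of_mul_self_of_coprime_add {x y M : ℕ} (h : x * x ≡ y * y [MOD M])
    (hc : M.Coprime (x + y)) : x ≡ y [MOD M] := by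
  refine Nat.ModEq.cancel_left_of_coprime hc ?_
  calc (x + y) * x = x * x + y * x := by ring
    _ ≡ y * y + y * x [MOD M] := h.add_right _
    _ = (x + y) * y := by ring

def unitPair (i : ℕ) : ℕ := (3 * i + 1) * (3 * i + 2)

def unitProd (x : ℕ) : ℕ := ∏ i ∈ range x, unitPair i

lemma unitPair_mod_three (i : ℕ) : unitPair i % 3 = 2 := by
  have h : unitPair i = 3 * (3 * i * i + 3 * i) + 2 := by unfold unitPair; ring
  omega

lemma coprime_three_unitPair (i : ℕ) : Coprime 3 (unitPair i) := by
  rw [Nat.Prime.coprime_iff_not_dvd prime_three]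
  have := unitPair_mod_three i
  omega

lemma coprime_three_unitProd (x : ℕ) : Coprime 3 (unitProd x) :=
  Coprime.prod_right fun i _ => coprime_three_unitPair i

lemma unitProd_pos (x : ℕ) : 0 < unitProd x :=
  prod_pos fun i _ => by unfold unitPair; positivity

lemma unitProd_add (m a : ℕ) :
    unitProd (m + a) = unitProd a * ∏ i ∈ range m, unitPair (a + i) := by
  rw [add_comm]
  exact prod_range_add _ a m

lemma factorial_three_mul (x : ℕ) : (3 * x)! = 3 ^ x * x ! * unitProd x := by
  induction x with
  | zero => simp [unitProd]
  | succ x ih =>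
    rw [show 3 * (x + 1) = 3 * x + 2 + 1 by ring, factorial_succ, factorial_succ, factorial_succ,
      ih, factorial_succ]
    simp only [unitProd, prod_range_succ, unitPair, pow_succ]
    ring

lemma choose_three_mul_mul_unitProd (m a : ℕ) :
    (3 * (m + a)).choose (3 * m) * unitProd m
      = (m + a).choose m * ∏ i ∈ range m, unitPair (a + i) := by
  have hpos : 0 < 3 ^ (m + a) * m ! * a ! * unitProd a := by
    have := unitProd_pos a
    positivity
  refine Nat.eq_of_mul_eq_mul_right hpos ?_
  have h3 := add_choose_mul_factorial_mul_factorial (3 * m) (3 * a)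
  have h1 := add_choose_mul_factorial_mul_factorial m a
  rw [← choose_symm_add] at h3 h1
  rw [← mul_add, factorial_three_mul, factorial_three_mul, factorial_three_mul,
    unitProd_add, ← h1] at h3
  rw [pow_add] at h3 ⊢
  linear_combination h3

lemma unitPair_add_mul_unitPair_add_modEq (a i j : ℕ) :
    unitPair (a + i) * unitPair (a + j) ≡ unitPair i * unitPair j
      [MOD 9 * a * (a + i + j + 1)] := by
  have key : unitPair (a + i) * unitPair (a + j) = unitPair i * unitPair j
      + 9 * a * (a + i + j + 1) * ((3 * i + 1) * (3 * j + 2) + (3 * i + 2) * (3 * j + 1)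
        + 9 * a * (a + i + j + 1)) := by
    unfold unitPair; ring
  rw [Nat.ModEq, key, Nat.add_mul_mod_self_left]

lemma prod_unitPair_add_mul_self_modEq (m a : ℕ) :
    (∏ i ∈ range m, unitPair (a + i)) * ∏ i ∈ range m, unitPair (a + i)
      ≡ unitProd m * unitProd m [MOD 9 * a * (m + a)] := by
  calc (∏ i ∈ range m, unitPair (a + i)) * ∏ i ∈ range m, unitPair (a + i)
      = ∏ i ∈ range m, unitPair (a + i) * unitPair (a + (m - 1 - i)) := by
        rw [prod_mul_distrib, prod_range_reflect (fun i => unitPair (a + i)) m]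
    _ ≡ ∏ i ∈ range m, unitPair i * unitPair (m - 1 - i) [MOD 9 * a * (m + a)] := by
        refine Nat.ModEq.prod fun i hi => ?_
        have h := unitPair_add_mul_unitPair_add_modEq a i (m - 1 - i)
        rwa [show a + i + (m - 1 - i) + 1 = m + a by grind] at h
    _ = unitProd m * unitProd m := by
        rw [prod_mul_distrib, prod_range_reflect unitPair m, unitProd]

lemma prod_unitPair_add_modEq (m a : ℕ) :
    ∏ i ∈ range m, unitPair (a + i)
      ≡ unitProd m [MOD 3 ^ ((m + a).factorization 3 + a.factorization 3 + 2)] := by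
  have hdvd : 3 ^ ((m + a).factorization 3 + a.factorization 3 + 2) ∣ 9 * a * (m + a) := by
    rw [show 3 ^ ((m + a).factorization 3 + a.factorization 3 + 2)
        = 9 * 3 ^ a.factorization 3 * 3 ^ (m + a).factorization 3 by ring]
    exact mul_dvd_mul (mul_dvd_mul_left 9 (ordProj_dvd a 3)) (ordProj_dvd _ 3)
  refine ((prod_unitPair_add_mul_self_modEq m a).of_dvd hdvd).of_mul_self_of_coprime_add
    (Coprime.pow_left _ ?_)
  have hmod : ∏ i ∈ range m, unitPair (a + i) ≡ unitProd m [MOD 3] :=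
    Nat.ModEq.prod fun i _ => (unitPair_mod_three _).trans (unitPair_mod_three i).symm
  have hP := (Nat.Prime.coprime_iff_not_dvd prime_three).1 (coprime_three_unitProd m)
  rw [Nat.Prime.coprime_iff_not_dvd prime_three]
  unfold Nat.ModEq at hmod
  omega

theorem choose_three_mul_add_modEq (m a : ℕ) :
    (3 * (m + a)).choose (3 * m) ≡ (m + a).choose m
      [MOD 3 ^ (((m + a).choose m).factorization 3
        + ((m + a).factorization 3 + a.factorization 3 + 2))] := by
  have h := ((prod_unitPair_add_modEq m a).mul_left' ((m + a).choose m)).of_dvd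
    (mul_dvd_mul_right (ordProj_dvd ((m + a).choose m) 3) _)
  rw [← choose_three_mul_mul_unitProd, ← pow_add] at h
  exact Nat.ModEq.cancel_right_of_coprime ((coprime_three_unitProd m).pow_left _) h

theorem stmt12_general (n m : ℕ) (hmn : m ≤ n) :
    (3 * n).choose (3 * m) ≡ n.choose m [MOD 3 ^ (2 * n.factorization 3 + 2)] := by
  obtain ⟨a, rfl⟩ := Nat.exists_eq_add_of_le hmn
  rcases Nat.eq_zero_or_pos a with rfl | ha
  · simp [Nat.ModEq.refl]
  have hv : (m + a).factorization 3 ≤ ((m + a).choose m).factorization 3 + a.factorization 3 := by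
    rw [choose_symm_add]
    exact factorization_le_factorization_choose_add (le_add_left le_rfl) ha.ne'
  exact (choose_three_mul_add_modEq m a).of_dvd (pow_dvd_pow 3 (by omega))

theorem stmt12 (n m : ℕ) (hmn : m ≤ n) (hn : 1 ≤ n) :
    (3 * n).choose (3 * m) ≡ n.choose m [MOD 3 ^ (2 * n.factorization 3 + 2)] :=
  stmt12_general n m hmn
end

section
/- For every prime p ≥ 5 and nonnegative integers n ≥ m, the binomial coefficient C(2p⁴, p⁴) is congruent to C(2p, p) modulo p⁶. -/
/-!
Let `P(N)` be the product of the integers in `(0, N]` prime to `p`. Removing the multiples of `p`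
from the factorials gives `C(2pM, pM) · P(pM) = C(2M, M) · ∏ (pM + i)`, with `i` running over the
same integers, so `C(2N, N) ≡ C(2N/p, N/p) (mod p⁶)` for `N = p^k` follows from
`∏ (N + i) ≡ ∏ i (mod p⁶)`. Pairing `i` with `N - i` gives `(N + i)(2N - i) = i(N - i) + 2N²`,
so the squares of the two products differ only through the terms `2N²`; as the products agree
mod `p` and are prime to `p`, it suffices to compare the squares. For `N = p³, p⁴` the terms
`2N²` vanish mod `p⁶`. For `N = p²` they contribute `2p⁴ Σ 1/i²`, and `Σ 1/i²` over the units
mod `p²` vanishes, since doubling permutes the units and `2² - 1 = 3` is invertible.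
-/

open Finset Nat

namespace Jacobsthal

def nonMultiples (p N : ℕ) : Finset ℕ := (Ioc 0 N).filter (fun i => ¬ p ∣ i)

variable {p : ℕ}

@[simp]
lemma mem_nonMultiples {N i : ℕ} :
    i ∈ nonMultiples p N ↔ (0 < i ∧ i ≤ N) ∧ ¬ p ∣ i := by
  simp [nonMultiples]

lemma factorial_mul_eq (hp : 0 < p) (n : ℕ) :
    (p * n)! = p ^ n * n ! * ∏ i ∈ nonMultiples p (p * n), i := by
  have hmult : (Ioc 0 (p * n)).filter (p ∣ ·) = (Ioc 0 n).image (p * ·) := by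
    ext i
    simp only [mem_filter, mem_Ioc, mem_image]
    constructor
    · rintro ⟨⟨h0, hle⟩, j, rfl⟩
      exact ⟨j, ⟨Nat.pos_of_mul_pos_left h0, Nat.le_of_mul_le_mul_left hle hp⟩, rfl⟩
    · rintro ⟨j, ⟨h0, hle⟩, rfl⟩
      exact ⟨⟨Nat.mul_pos hp h0, Nat.mul_le_mul_left p hle⟩, j, rfl⟩
  have hfact (m : ℕ) : ∏ i ∈ Ioc 0 m, i = m ! := by
    rw [← Finset.Ico_add_one_add_one_eq_Ioc, zero_add, prod_Ico_id_eq_factorial]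
  rw [← hfact, ← prod_filter_mul_prod_filter_not (Ioc 0 (p * n)) (p ∣ ·), hmult,
    prod_image (fun _ _ _ _ => Nat.eq_of_mul_eq_mul_left hp), prod_mul_distrib, prod_const,
    Nat.card_Ioc, hfact]
  rfl

lemma prod_nonMultiples_two_mul {N : ℕ} (hpN : p ∣ N) :
    ∏ i ∈ nonMultiples p (2 * N), i =
      (∏ i ∈ nonMultiples p N, i) * ∏ i ∈ nonMultiples p N, (N + i) := by
  have hshift : Ioc N (2 * N) = (Ioc 0 N).image (N + ·) := by
    rw [image_add_left_Ioc, add_zero, two_mul]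
  simp only [nonMultiples, prod_filter]
  rw [← prod_Ioc_consecutive _ (Nat.zero_le N) (by omega : N ≤ 2 * N), hshift,
    prod_image (fun _ _ _ _ => Nat.add_left_cancel)]
  simp only [Nat.dvd_add_right hpN]

lemma centralBinom_mul_prod (hp : 0 < p) (M : ℕ) :
    centralBinom (p * M) * ∏ i ∈ nonMultiples p (p * M), i =
      centralBinom M * ∏ i ∈ nonMultiples p (p * M), (p * M + i) := by
  have hcb (n : ℕ) : centralBinom n * n ! * n ! = (2 * n)! := by
    rw [centralBinom_eq_two_mul_choose,
      ← Nat.choose_mul_factorial_mul_factorial (by omega : n ≤ 2 * n)]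
    congr 2
    omega
  set P := ∏ i ∈ nonMultiples p (p * M), i
  have hP : 0 < P := prod_pos fun i hi => (mem_nonMultiples.mp hi).1.1
  have key : centralBinom (p * M) * P * (p ^ M * M ! * (p ^ M * M ! * P)) =
      centralBinom M * (∏ i ∈ nonMultiples p (p * M), (p * M + i)) *
        (p ^ M * M ! * (p ^ M * M ! * P)) := by
    calc _ = centralBinom (p * M) * (p * M)! * (p * M)! := by rw [factorial_mul_eq hp]; ring
      _ = (p * (2 * M))! := by rw [hcb]; ring_nf
      _ = _ := by
        rw [factorial_mul_eq hp, show p * (2 * M) = 2 * (p * M) by ring,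
          prod_nonMultiples_two_mul (dvd_mul_right p M), ← hcb, pow_mul']
        ring
  exact Nat.eq_of_mul_eq_mul_right (by positivity) key

lemma centralBinom_modEq_of_prod_modEq (hp : p.Prime) {M e : ℕ}
    (h : ∏ i ∈ nonMultiples p (p * M), (p * M + i) ≡
      ∏ i ∈ nonMultiples p (p * M), i [MOD p ^ e]) :
    centralBinom (p * M) ≡ centralBinom M [MOD p ^ e] := by
  have hcop : Nat.Coprime (p ^ e) (∏ i ∈ nonMultiples p (p * M), i) :=
    Nat.Coprime.pow_left e <| Nat.Coprime.prod_right fun i hi =>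
      hp.coprime_iff_not_dvd.mpr (mem_nonMultiples.mp hi).2
  refine Nat.ModEq.cancel_right_of_coprime hcop ?_
  rw [centralBinom_mul_prod hp.pos]
  exact Nat.ModEq.mul_left _ h

lemma prod_nonMultiples_comp_sub {M : Type*} [CommMonoid M] {N : ℕ} (hpN : p ∣ N)
    (f : ℕ → M) :
    ∏ i ∈ nonMultiples p N, f (N - i) = ∏ i ∈ nonMultiples p N, f i := by
  have hmem : ∀ i ∈ nonMultiples p N, N - i ∈ nonMultiples p N := by
    intro i hi
    obtain ⟨⟨hi0, hiN⟩, hpi⟩ := mem_nonMultiples.mp hi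
    have hne : i ≠ N := fun h => hpi (h ▸ hpN)
    refine mem_nonMultiples.mpr ⟨⟨by omega, by omega⟩, fun hd => hpi ?_⟩
    simpa [Nat.sub_sub_self hiN] using Nat.dvd_sub hpN hd
  have hinv : ∀ i ∈ nonMultiples p N, N - (N - i) = i := fun i hi =>
    Nat.sub_sub_self (mem_nonMultiples.mp hi).1.2
  exact prod_nbij' (N - ·) (N - ·) hmem hmem hinv hinv fun _ _ => rfl

lemma sq_prod_nonMultiples {N : ℕ} (hpN : p ∣ N) :
    (∏ i ∈ nonMultiples p N, i) ^ 2 = ∏ i ∈ nonMultiples p N, i * (N - i) := by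
  rw [sq]
  nth_rewrite 2 [← prod_nonMultiples_comp_sub hpN (fun i => i)]
  rw [← prod_mul_distrib]

lemma sq_prod_nonMultiples_add {N : ℕ} (hpN : p ∣ N) :
    (∏ i ∈ nonMultiples p N, (N + i)) ^ 2 =
      ∏ i ∈ nonMultiples p N, (i * (N - i) + 2 * N ^ 2) := by
  rw [sq]
  nth_rewrite 2 [← prod_nonMultiples_comp_sub hpN]
  rw [← prod_mul_distrib]
  refine prod_congr rfl fun i hi => ?_
  obtain ⟨j, rfl⟩ := Nat.exists_eq_add_of_le (mem_nonMultiples.mp hi).1.2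
  rw [Nat.add_sub_cancel_left]
  ring

lemma modEq_of_sq_modEq {e X Y : ℕ} (hp : p.Prime) (hXY : X ≡ Y [MOD p]) (hY : ¬ p ∣ 2 * Y)
    (hsq : X ^ 2 ≡ Y ^ 2 [MOD p ^ e]) : X ≡ Y [MOD p ^ e] := by
  rcases e.eq_zero_or_pos with rfl | he
  · exact Nat.modEq_one
  have hunit : IsUnit ((X + Y : ℕ) : ZMod (p ^ e)) := by
    rwa [ZMod.isUnit_natCast_iff_not_dvd_pow hp he, (hXY.add_right Y).dvd_iff dvd_rfl, ← two_mul]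
  rw [← ZMod.natCast_eq_natCast_iff] at hsq ⊢
  push_cast at hsq hunit
  rw [← sub_eq_zero, ← hunit.mul_left_eq_zero]
  linear_combination hsq

lemma prod_add_modEq_of_sq_modEq (hp : p.Prime) (hp2 : p ≠ 2) {N e : ℕ} (hpN : p ∣ N)
    (h : ∏ i ∈ nonMultiples p N, (i * (N - i) + 2 * N ^ 2) ≡
      ∏ i ∈ nonMultiples p N, i * (N - i) [MOD p ^ e]) :
    ∏ i ∈ nonMultiples p N, (N + i) ≡ ∏ i ∈ nonMultiples p N, i [MOD p ^ e] := by
  refine modEq_of_sq_modEq hp ?_ ?_ ?_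
  · exact Nat.ModEq.prod fun i _ => by
      simpa using (Nat.modEq_zero_iff_dvd.mpr hpN).add_right i
  · rw [hp.dvd_mul, Nat.prime_dvd_prime_iff_eq hp Nat.prime_two,
      Prime.dvd_finsetProd_iff hp.prime]
    rintro (h2 | ⟨i, hi, hpi⟩)
    · exact hp2 h2
    · exact (mem_nonMultiples.mp hi).2 hpi
  · rwa [sq_prod_nonMultiples_add hpN, sq_prod_nonMultiples hpN]

lemma prod_add_modEq_of_dvd_sq (hp : p.Prime) (hp2 : p ≠ 2) {N e : ℕ} (hpN : p ∣ N)
    (hN : p ^ e ∣ N ^ 2) :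
    ∏ i ∈ nonMultiples p N, (N + i) ≡ ∏ i ∈ nonMultiples p N, i [MOD p ^ e] :=
  prod_add_modEq_of_sq_modEq hp hp2 hpN <| Nat.ModEq.prod fun i _ => by
    simpa using (Nat.modEq_zero_iff_dvd.mpr (dvd_mul_of_dvd_right hN 2)).add_left (i * (N - i))

lemma prod_one_add_mul_of_mul_self_eq_zero {R ι : Type*} [CommRing R] {c : R} (hc : c * c = 0)
    (s : Finset ι) (f : ι → R) : ∏ i ∈ s, (1 + c * f i) = 1 + c * ∑ i ∈ s, f i := by
  classical
  induction s using Finset.induction_on with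
  | empty => simp
  | insert x s hx ih =>
    rw [prod_insert hx, sum_insert hx, ih]
    linear_combination (f x * ∑ i ∈ s, f i) * hc

lemma sum_units_pow_eq_zero {R : Type*} [CommRing R] [Fintype Rˣ] (n : ℕ) (g : Rˣ)
    (hg : IsUnit ((g : R) ^ n - 1)) : ∑ u : Rˣ, (u : R) ^ n = 0 := by
  have h := Equiv.sum_comp (Equiv.mulLeft g) (fun u : Rˣ => (u : R) ^ n)
  simp only [Equiv.coe_mulLeft, Units.val_mul, mul_pow, ← mul_sum] at h
  rw [← hg.mul_right_eq_zero]
  linear_combination h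

lemma natCast_mul_eq_zero_of_castHom_eq_zero {m n b : ℕ} [NeZero n] (hmn : m ∣ n)
    (hn : n ∣ b * m) {x : ZMod n} (hx : ZMod.castHom hmn (ZMod m) x = 0) :
    (b : ZMod n) * x = 0 := by
  rw [← ZMod.natCast_zmod_val x] at hx ⊢
  rw [map_natCast, ZMod.natCast_eq_zero_iff] at hx
  rw [← Nat.cast_mul, ZMod.natCast_eq_zero_iff]
  exact hn.trans (Nat.mul_dvd_mul_left b hx)

variable [Fact p.Prime]

lemma sum_nonMultiples_eq_sum_units {M : Type*} [AddCommMonoid M] {k : ℕ} (hk : k ≠ 0)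
    (f : ZMod (p ^ k) → M) :
    ∑ i ∈ nonMultiples p (p ^ k), f i = ∑ u : (ZMod (p ^ k))ˣ, f u := by
  have hunit (i : ℕ) : IsUnit (i : ZMod (p ^ k)) ↔ ¬ p ∣ i :=
    ZMod.isUnit_natCast_iff_not_dvd_pow Fact.out (Nat.pos_of_ne_zero hk)
  have hcop : ∀ i ∈ nonMultiples p (p ^ k), i.Coprime (p ^ k) := fun i hi =>
    (ZMod.isUnit_iff_coprime i _).mp ((hunit i).mpr (mem_nonMultiples.mp hi).2)
  refine sum_bij' (fun i hi => ZMod.unitOfCoprime i (hcop i hi))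
    (fun u _ => (u : ZMod (p ^ k)).val) (fun _ _ => mem_univ _) (fun u _ => ?_) (fun i hi => ?_)
    (fun u _ => ?_) (fun i hi => ?_)
  · have hpu : ¬ p ∣ (u : ZMod (p ^ k)).val := by
      rw [← hunit, ZMod.natCast_zmod_val]
      exact u.isUnit
    refine mem_nonMultiples.mpr ⟨⟨Nat.pos_of_ne_zero fun h => hpu (h ▸ dvd_zero p),
      (ZMod.val_lt _).le⟩, hpu⟩
  · obtain ⟨⟨_, hiN⟩, hpi⟩ := mem_nonMultiples.mp hi
    have hlt : i < p ^ k := lt_of_le_of_ne hiN fun h => hpi (h ▸ dvd_pow_self p hk)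
    simp [ZMod.val_cast_of_lt hlt]
  · ext
    simp
  · simp

lemma sum_sq_eq_zero_of_mul_eq_one (hp5 : 5 ≤ p) {k : ℕ} (hk : k ≠ 0) (v : ℕ → ZMod (p ^ k))
    (hv : ∀ i ∈ nonMultiples p (p ^ k), (i : ZMod (p ^ k)) * v i = 1) :
    ∑ i ∈ nonMultiples p (p ^ k), v i ^ 2 = 0 := by
  have hunit (m : ℕ) (hm : 0 < m) (hmp : m < p) : IsUnit (m : ZMod (p ^ k)) :=
    (ZMod.isUnit_natCast_iff_not_dvd_pow Fact.out (Nat.pos_of_ne_zero hk)).mpr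
      fun h => absurd (Nat.le_of_dvd hm h) (by omega)
  have two : IsUnit (2 : ZMod (p ^ k)) := by exact_mod_cast hunit 2 (by norm_num) (by omega)
  have three : IsUnit ((two.unit : ZMod (p ^ k)) ^ 2 - 1) := by
    rw [IsUnit.unit_spec,
      show (2 : ZMod (p ^ k)) ^ 2 - 1 = ((3 : ℕ) : ZMod (p ^ k)) by norm_num]
    exact hunit 3 (by norm_num) (by omega)
  calc ∑ i ∈ nonMultiples p (p ^ k), v i ^ 2
      = ∑ i ∈ nonMultiples p (p ^ k), ((i : ZMod (p ^ k))⁻¹) ^ 2 :=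
        sum_congr rfl fun i hi => by rw [ZMod.inv_eq_of_mul_eq_one _ _ _ (hv i hi)]
    _ = ∑ u : (ZMod (p ^ k))ˣ, ((u⁻¹ : (ZMod (p ^ k))ˣ) : ZMod (p ^ k)) ^ 2 := by
        rw [sum_nonMultiples_eq_sum_units hk (fun x => x⁻¹ ^ 2)]
        simp only [ZMod.inv_coe_unit]
    _ = ∑ u : (ZMod (p ^ k))ˣ, (u : ZMod (p ^ k)) ^ 2 :=
        Equiv.sum_comp (Equiv.inv _) (fun u : (ZMod (p ^ k))ˣ => (u : ZMod (p ^ k)) ^ 2)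
    _ = 0 := sum_units_pow_eq_zero 2 two.unit three

lemma prod_mul_sub_add_modEq_pow_six (hp5 : 5 ≤ p) :
    ∏ i ∈ nonMultiples p (p ^ 2), (i * (p ^ 2 - i) + 2 * (p ^ 2) ^ 2) ≡
      ∏ i ∈ nonMultiples p (p ^ 2), i * (p ^ 2 - i) [MOD p ^ 6] := by
  set R := ZMod (p ^ 6)
  set c : R := 2 * (p : R) ^ 4
  have hp6 : (p : R) ^ 6 = 0 := by exact_mod_cast ZMod.natCast_self (p ^ 6)
  have hinv : ∀ i ∈ nonMultiples p (p ^ 2), (i : R) * (i : R)⁻¹ = 1 := fun i hi =>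
    ZMod.mul_inv_of_unit _ ((ZMod.isUnit_natCast_iff_not_dvd_pow Fact.out (by norm_num)).mpr
      (mem_nonMultiples.mp hi).2)
  have hfactor : ∀ i ∈ nonMultiples p (p ^ 2), ((i * (p ^ 2 - i) + 2 * (p ^ 2) ^ 2 : ℕ) : R) =
      ((i * (p ^ 2 - i) : ℕ) : R) * (1 + c * -((i : R)⁻¹ ^ 2)) := by
    intro i hi
    -- `i (p² - i) · i⁻² = p² i⁻¹ - 1`, and `2p⁴ · p²` vanishes
    rw [Nat.cast_add, Nat.cast_mul, Nat.cast_sub (mem_nonMultiples.mp hi).1.2]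
    push_cast
    linear_combination (-2 * (p : R) ^ 4 * ((i : R) * (i : R)⁻¹ + 1)) * hinv i hi
      + 2 * (i : R) * (i : R)⁻¹ ^ 2 * hp6
  have hcc : c * c = 0 := by linear_combination 4 * (p : R) ^ 2 * hp6
  have hsum : c * ∑ i ∈ nonMultiples p (p ^ 2), -((i : R)⁻¹ ^ 2) = 0 := by
    have hdvd : p ^ 2 ∣ p ^ 6 := pow_dvd_pow p (by norm_num)
    have hreduce :
        ZMod.castHom hdvd (ZMod (p ^ 2)) (∑ i ∈ nonMultiples p (p ^ 2), (i : R)⁻¹ ^ 2) = 0 := by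
      rw [map_sum]
      simp only [map_pow]
      refine sum_sq_eq_zero_of_mul_eq_one hp5 two_ne_zero _ fun i hi => ?_
      rw [← map_natCast (ZMod.castHom hdvd (ZMod (p ^ 2))) i, ← map_mul, hinv i hi, map_one]
    have hp4 : (p : R) ^ 4 * ∑ i ∈ nonMultiples p (p ^ 2), (i : R)⁻¹ ^ 2 = 0 := by
      exact_mod_cast natCast_mul_eq_zero_of_castHom_eq_zero hdvd (dvd_of_eq (by ring)) hreduce
    rw [sum_neg_distrib, mul_neg, mul_assoc, hp4, mul_zero, neg_zero]
  rw [← ZMod.natCast_eq_natCast_iff, Nat.cast_prod, Nat.cast_prod, prod_congr rfl hfactor,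
    prod_mul_distrib, prod_one_add_mul_of_mul_self_eq_zero hcc, hsum, add_zero, mul_one]

end Jacobsthal

open Jacobsthal

theorem stmt19_general (p : ℕ) (hp : p.Prime) (hp5 : 5 ≤ p) :
    (2 * p ^ 4).choose (p ^ 4) ≡ (2 * p).choose p [MOD p ^ 6] := by
  have := Fact.mk hp
  have hp2 : p ≠ 2 := by omega
  have step (k : ℕ) (h : ∏ i ∈ nonMultiples p (p ^ (k + 1)), (p ^ (k + 1) + i) ≡
      ∏ i ∈ nonMultiples p (p ^ (k + 1)), i [MOD p ^ 6]) :
      centralBinom (p ^ (k + 1)) ≡ centralBinom (p ^ k) [MOD p ^ 6] := by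
    rw [pow_succ' p k] at h ⊢
    exact centralBinom_modEq_of_prod_modEq hp h
  have high (k : ℕ) (hk : 2 ≤ k) :
      centralBinom (p ^ (k + 1)) ≡ centralBinom (p ^ k) [MOD p ^ 6] :=
    step k <| prod_add_modEq_of_dvd_sq hp hp2
      (dvd_pow_self p k.succ_ne_zero) (by rw [← pow_mul]; exact pow_dvd_pow p (by omega))
  rw [← centralBinom_eq_two_mul_choose, ← centralBinom_eq_two_mul_choose]
  calc centralBinom (p ^ 4) ≡ centralBinom (p ^ 3) [MOD p ^ 6] := high 3 (by norm_num)
    _ ≡ centralBinom (p ^ 2) [MOD p ^ 6] := high 2 le_rfl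
    _ ≡ centralBinom (p ^ 1) [MOD p ^ 6] := step 1 <| prod_add_modEq_of_sq_modEq hp hp2
        (dvd_pow_self p two_ne_zero) (prod_mul_sub_add_modEq_pow_six hp5)
    _ = centralBinom p := by rw [pow_one]

theorem stmt19 (p : ℕ) (hp : p.Prime) (hp5 : 5 ≤ p) (n m : ℕ) (hmn : m ≤ n) :
    (2 * p ^ 4).choose (p ^ 4) ≡ (2 * p).choose p [MOD p ^ 6] :=
  stmt19_general p hp hp5
end
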